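/- Let $w \in S_n$ be a derangement, let $J = I_1(w)$ be its anti-exceedance set, and suppose $a \in J$, $b \notin J$. Then $(J \setminus \{a\}) \cup \{b\}$ belongs to the positroid $\mathcal{M}(w)$ (i.e., $I_r(w) \preceq_r (J \setminus \{a\}) \cup \{b\}$ in shifted Gale order for all $r \in [n]$) if and only if $a < b$ and for every $r \in [a+1, b]$: (1) there exists $x \in [a, r-1]$ with $w^{-1}(x) \geq r$, and (2) there exists $y \in [r, b]$ with $w^{-1}(y) \leq r-1$. -/

import Mathlib

/-- Gale order on subsets of `Fin n`: compare the `h`-th smallest elements. -/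
abbrev galeLE {n : ℕ} (I J : Finset (Fin n)) : Prop :=
  I.card = J.card ∧
    ∀ h < I.card, ((I.sort (· ≤ ·)).map Fin.val).getD h 0 ≤ ((J.sort (· ≤ ·)).map Fin.val).getD h 0

/-- The initial set `y[k] = {y(1),...,y(k)}` of a permutation. -/
def initSet {n : ℕ} (y : Equiv.Perm (Fin n)) (k : ℕ) : Finset (Fin n) :=
  (Finset.univ.filter fun j : Fin n => j.val < k).image y

/-- Bruhat order via the tableau criterion. -/
def bruhatLE {n : ℕ} (u v : Equiv.Perm (Fin n)) : Prop :=
  ∀ k : ℕ, galeLE (initSet u k) (initSet v k)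

/-- `v` is `k`-Grassmannian: increasing on the first `k` positions and on the rest. -/
def isGrassmannian {n : ℕ} (v : Equiv.Perm (Fin n)) (k : ℕ) : Prop :=
  (∀ i j : Fin n, i < j → j.val < k → v i < v j) ∧
    (∀ i j : Fin n, i < j → k ≤ i.val → v i < v j)

/-- The points `a,b,c,d` occur (weakly) in this clockwise cyclic order. -/
abbrev cyclic4 (a b c d : ℕ) : Prop :=
  ((if b < a then 1 else 0) + (if c < b then 1 else 0) +
      (if d < c then 1 else 0) + (if a < d then 1 else 0) : ℕ) ≤ 1

/-- Arcs `i ↦ w i` and `j ↦ w j` form an alignment (in this order):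
the points occur clockwise as `i, w i, w j, j`. -/
abbrev isAlignment {n : ℕ} (w : Equiv.Perm (Fin n)) (i j : Fin n) : Prop :=
  i ≠ j ∧ cyclic4 i.val (w i).val (w j).val j.val

/-- Arcs `i ↦ w i` and `j ↦ w j` form a misalignment (in this order):
the points occur clockwise as `i, w i, j, w j`. -/
abbrev isMisalignment {n : ℕ} (w : Equiv.Perm (Fin n)) (i j : Fin n) : Prop :=
  i ≠ j ∧ cyclic4 i.val (w i).val j.val (w j).val

/-- `x` lies strictly inside the clockwise open arc from `a` to `b`. -/
abbrev cIoo (a b x : ℕ) : Prop :=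
  (a < b ∧ a < x ∧ x < b) ∨ (b ≤ a ∧ (x < b ∨ a < x))

/-- Arcs `i ↦ w i` and `j ↦ w j` must cross: exactly one endpoint of the second
arc lies strictly inside the clockwise arc from `i` to `w i`. -/
abbrev isCrossing {n : ℕ} (w : Equiv.Perm (Fin n)) (i j : Fin n) : Prop :=
  i ≠ j ∧ Xor' (cIoo i.val (w i).val j.val) (cIoo i.val (w i).val (w j).val)

/-- The shifted anti-exceedance set `I_r(w) = {i : i <_r w⁻¹ i}` (0-indexed start `r`). -/
abbrev antiExc {n : ℕ} (w : Equiv.Perm (Fin n)) (r : Fin n) : Finset (Fin n) :=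
  Finset.univ.filter fun i => (i - r).val < (w.symm i - r).val

/-- The shifted Gale order `⪯_r`, obtained by rotating so that `r` is smallest. -/
abbrev shiftedGaleLE {n : ℕ} (r : Fin n) (I J : Finset (Fin n)) : Prop :=
  galeLE (I.image fun x => x - r) (J.image fun x => x - r)

/-- The collection `{y[k] : y ∈ [u,v]}`. -/
def intervalBases {n : ℕ} (u v : Equiv.Perm (Fin n)) (k : ℕ) : Set (Finset (Fin n)) :=
  {I | ∃ y : Equiv.Perm (Fin n), bruhatLE u y ∧ bruhatLE y v ∧ initSet y k = I}


/-!
Write `J = I_1(w)`. An element `x` changes status between `J` and `I_r(w)` exactly when the arc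
`x ↦ w⁻¹ x` crosses the cut just before `r`: `I_r(w) = (J \ L) ∪ R` with
`L = {x < r ≤ w⁻¹ x} ⊆ J` and `R = {w⁻¹ x < r ≤ x}` disjoint from `J`, and `|L| = |R|` because
`w⁻¹` is a bijection. The shifted Gale inequalities compare counts on the cyclic windows
`W = [r, r + t]`, where they read `[b ∈ W] + |L ∩ W| ≤ [a ∈ W] + |R ∩ W|`. A window starting at
`r` either misses `L` or contains `R`, so `|L ∩ W| ≤ |R ∩ W|`, strictly iff `W` misses a point
of `L` and meets `R`. Only windows containing `b` but not `a` matter; they exist iff `a < r ≤ b`,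
and the extreme ones, `[r, b]` and `[r, a - 1]`, produce `y` and `x`.
-/

open Finset

theorem List.Pairwise.getElem_le_iff_lt_length_filter {α : Type*} [LinearOrder α] {l : List α}
    (hl : l.Pairwise (· ≤ ·)) (t : α) {h : ℕ} (hh : h < l.length) :
    l[h] ≤ t ↔ h < (l.filter (· ≤ t)).length := by
  induction l generalizing h with
  | nil => simp at hh
  | cons x xs ih =>
    rw [List.pairwise_cons] at hl
    by_cases hx : x ≤ t
    · cases h with
      | zero => simp [hx]
      | succ m => simp [hx, ih hl.2 (Nat.lt_of_succ_lt_succ hh)]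
    · have hgt : ∀ y ∈ x :: xs, t < y := by
        intro y hy
        rcases List.mem_cons.1 hy with rfl | hy
        · exact lt_of_not_ge hx
        · exact (lt_of_not_ge hx).trans_le (hl.1 y hy)
      rw [List.filter_eq_nil_iff.2 fun y hy => by simpa using hgt y hy]
      simpa using hgt _ (List.getElem_mem hh)

theorem Finset.getD_map_val_sort_le_iff {n : ℕ} (s : Finset (Fin n)) {h : ℕ} (hh : h < #s) (t : ℕ) :
    ((s.sort (· ≤ ·)).map Fin.val).getD h 0 ≤ t ↔ h < #{x ∈ s | x.val ≤ t} := by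
  have hsorted : ((s.sort (· ≤ ·)).map Fin.val).Pairwise (· ≤ ·) :=
    (s.pairwise_sort (· ≤ ·)).map _ fun _ _ => id
  have hlen : h < ((s.sort (· ≤ ·)).map Fin.val).length := by simpa using hh
  have hfilter : (((s.sort (· ≤ ·)).map Fin.val).filter (· ≤ t)).length = #{x ∈ s | x.val ≤ t} := by
    rw [List.filter_map, List.length_map, card_def, filter_val, ← sort_eq s (· ≤ ·),
      Multiset.filter_coe, Multiset.coe_card]
    rfl
  rw [List.getD_eq_getElem _ _ hlen, hsorted.getElem_le_iff_lt_length_filter t hlen, hfilter]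

theorem galeLE_iff_card_filter_le {n : ℕ} (I J : Finset (Fin n)) :
    galeLE I J ↔ #I = #J ∧ ∀ t : ℕ, #{x ∈ J | x.val ≤ t} ≤ #{x ∈ I | x.val ≤ t} := by
  refine and_congr_right fun hIJ => ⟨fun hle t => ?_, fun hcount h hh => ?_⟩
  · by_contra! hlt
    set m := #{x ∈ I | x.val ≤ t}
    have hmJ : m < #J := hlt.trans_le (card_le_card (filter_subset _ _))
    have hJ := (J.getD_map_val_sort_le_iff hmJ t).2 hlt
    exact lt_irrefl m ((I.getD_map_val_sort_le_iff (hIJ ▸ hmJ) t).1 ((hle m (hIJ ▸ hmJ)).trans hJ))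
  · set t := ((J.sort (· ≤ ·)).map Fin.val).getD h 0
    have hJ := (J.getD_map_val_sort_le_iff (hIJ ▸ hh) t).1 le_rfl
    exact (I.getD_map_val_sort_le_iff hh t).2 (hJ.trans_le (hcount t))

theorem Fin.val_sub_eq_ite {n : ℕ} (x r : Fin n) :
    (x - r).val = if r ≤ x then x.val - r.val else n + x.val - r.val := by
  split_ifs with h
  · exact Fin.coe_sub_iff_le.2 h
  · exact Fin.coe_sub_iff_lt.2 (lt_of_not_ge h)

def cyclicWindow {n : ℕ} (r : Fin n) (t : ℕ) : Finset (Fin n) :=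
  {x | (x - r).val ≤ t}

@[simp]
theorem mem_cyclicWindow {n : ℕ} {r x : Fin n} {t : ℕ} :
    x ∈ cyclicWindow r t ↔ (x - r).val ≤ t := by
  simp [cyclicWindow]

theorem shiftedGaleLE_iff_card_inter_le {n : ℕ} [NeZero n] (r : Fin n) (I J : Finset (Fin n)) :
    shiftedGaleLE r I J ↔
      #I = #J ∧ ∀ t : ℕ, #(J ∩ cyclicWindow r t) ≤ #(I ∩ cyclicWindow r t) := by
  have hinj : Function.Injective fun x : Fin n => x - r := sub_left_injective
  have hcount (S : Finset (Fin n)) (t : ℕ) :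
      #{x ∈ S.image (· - r) | x.val ≤ t} = #(S ∩ cyclicWindow r t) := by
    rw [filter_image, card_image_of_injective _ hinj, ← filter_mem_eq_inter]
    simp
  simp only [shiftedGaleLE, galeLE_iff_card_filter_le, card_image_of_injective _ hinj, hcount]

namespace Finset

variable {α : Type*} [DecidableEq α]

theorem card_sdiff_union_inter_add_card_inter {I L R : Finset α} (hL : L ⊆ I) (hR : Disjoint R I)
    (W : Finset α) : #((I \ L ∪ R) ∩ W) + #(L ∩ W) = #(I ∩ W) + #(R ∩ W) := by
  have hdisj : Disjoint ((I \ L) ∩ W) (R ∩ W) :=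
    (hR.symm.mono sdiff_subset le_rfl).mono inter_subset_left inter_subset_left
  have hsplit : #((I \ L) ∩ W) + #(L ∩ W) = #(I ∩ W) := by
    rw [← card_union_of_disjoint
      (disjoint_sdiff_self_left.mono inter_subset_left inter_subset_left)]
    congr 1
    ext x
    have := @hL x
    simp only [mem_union, mem_inter, mem_sdiff]
    tauto
  rw [union_inter_distrib_right, card_union_of_disjoint hdisj]
  omega

theorem card_insert_erase_inter_add_card_singleton_inter {J : Finset α} {a b : α} (ha : a ∈ J)
    (hb : b ∉ J) (W : Finset α) :
    #(insert b (J.erase a) ∩ W) + #({a} ∩ W) = #(J ∩ W) + #({b} ∩ W) := by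
  rw [insert_eq, erase_eq, union_comm]
  exact card_sdiff_union_inter_add_card_inter (singleton_subset_iff.2 ha)
    (disjoint_singleton_left.2 hb) W

theorem card_inter_le_card_inter {L R W : Finset α} (hLR : #L = #R) (hW : Disjoint L W ∨ R ⊆ W) :
    #(L ∩ W) ≤ #(R ∩ W) := by
  rcases hW with hW | hW
  · simp [disjoint_iff_inter_eq_empty.1 hW]
  · rw [inter_eq_left.2 hW, ← hLR]
    exact card_le_card inter_subset_left

theorem card_inter_lt_card_inter_iff {L R W : Finset α} (hLR : #L = #R)
    (hW : Disjoint L W ∨ R ⊆ W) :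
    #(L ∩ W) < #(R ∩ W) ↔ (∃ x ∈ L, x ∉ W) ∧ ∃ y ∈ R, y ∈ W := by
  rcases hW with hW | hW
  · rw [disjoint_iff_inter_eq_empty.1 hW, card_empty, card_pos]
    refine ⟨fun ⟨y, hy⟩ => ⟨?_, y, mem_inter.1 hy |>.1, mem_inter.1 hy |>.2⟩,
      fun ⟨_, y, hyR, hyW⟩ => ⟨y, mem_inter.2 ⟨hyR, hyW⟩⟩⟩
    obtain ⟨x, hx⟩ : L.Nonempty :=
      card_pos.1 (hLR ▸ (card_pos.2 ⟨y, hy⟩).trans_le (card_le_card inter_subset_left))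
    exact ⟨x, hx, disjoint_left.1 hW hx⟩
  · rw [inter_eq_left.2 hW, ← hLR]
    constructor
    · intro hlt
      obtain ⟨x, hxL, hxW⟩ := exists_of_ssubset (ssubset_of_subset_of_ne inter_subset_left
        fun h => hlt.ne (congrArg card h))
      obtain ⟨y, hy⟩ := card_pos.1 (hLR ▸ (Nat.zero_le _).trans_lt hlt)
      exact ⟨⟨x, hxL, fun h => hxW (mem_inter.2 ⟨hxL, h⟩)⟩, y, hy, hW hy⟩
    · rintro ⟨⟨x, hxL, hxW⟩, -⟩
      exact card_lt_card (ssubset_iff_subset_ne.2 ⟨inter_subset_left,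
        fun h => hxW (mem_inter.1 (h ▸ hxL)).2⟩)

end Finset

theorem Equiv.Perm.card_filter_notMem_eq {α : Type*} [Fintype α] [DecidableEq α]
    (σ : Equiv.Perm α) (s : Finset α) : #{x ∈ s | σ x ∉ s} = #{x ∈ sᶜ | σ x ∈ s} := by
  have hcard : #(s.map σ.symm.toEmbedding) = #s := card_map _
  convert card_sdiff_comm hcard.symm using 2 <;> ext x <;> simp [mem_map_equiv, and_comm]

section Crossers

variable {n : ℕ} (w : Equiv.Perm (Fin n)) (r : Fin n)

def crossersBelow : Finset (Fin n) := {x | x < r ∧ r ≤ w.symm x}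

def crossersAbove : Finset (Fin n) := {x | r ≤ x ∧ w.symm x < r}

theorem card_crossersBelow : #(crossersBelow w r) = #(crossersAbove w r) := by
  convert Equiv.Perm.card_filter_notMem_eq w.symm (Iio r) using 2 <;> ext x <;>
    simp [crossersBelow, crossersAbove]

theorem disjoint_crossersBelow_or_crossersAbove_subset (t : ℕ) :
    Disjoint (crossersBelow w r) (cyclicWindow r t) ∨ crossersAbove w r ⊆ cyclicWindow r t := by
  rcases lt_or_ge (r.val + t) n with h | h
  · refine .inl (disjoint_left.2 fun x hx hxW => ?_)
    simp only [crossersBelow, mem_filter, mem_univ, true_and, mem_cyclicWindow,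
      Fin.val_sub_eq_ite] at hx hxW
    split_ifs at hxW <;> omega
  · refine .inr fun x hx => ?_
    simp only [crossersAbove, mem_filter, mem_univ, true_and, mem_cyclicWindow,
      Fin.val_sub_eq_ite] at hx ⊢
    split_ifs <;> omega

variable [NeZero n]

theorem crossersBelow_subset_antiExc_zero : crossersBelow w r ⊆ antiExc w 0 := by
  intro x hx
  simp only [crossersBelow, mem_filter, mem_univ, true_and] at hx
  simp only [mem_filter, mem_univ, true_and, sub_zero]
  omega

theorem disjoint_crossersAbove_antiExc_zero : Disjoint (crossersAbove w r) (antiExc w 0) := by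
  refine disjoint_left.2 fun x hx hx0 => ?_
  simp only [crossersAbove, mem_filter, mem_univ, true_and, sub_zero] at hx hx0
  omega

theorem antiExc_eq_sdiff_union :
    antiExc w r = antiExc w 0 \ crossersBelow w r ∪ crossersAbove w r := by
  ext x
  have := (w.symm x).isLt
  simp only [crossersBelow, crossersAbove, mem_union, mem_sdiff, mem_filter, mem_univ,
    true_and, sub_zero, Fin.val_sub_eq_ite]
  split_ifs <;> omega

theorem card_antiExc_inter_add_card_crossersBelow_inter (W : Finset (Fin n)) :
    #(antiExc w r ∩ W) + #(crossersBelow w r ∩ W) =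
      #(antiExc w 0 ∩ W) + #(crossersAbove w r ∩ W) := by
  rw [antiExc_eq_sdiff_union w r]
  exact card_sdiff_union_inter_add_card_inter (crossersBelow_subset_antiExc_zero w r)
    (disjoint_crossersAbove_antiExc_zero w r) W

end Crossers

section Exchange

variable {n : ℕ} [NeZero n] {w : Equiv.Perm (Fin n)} {a b : Fin n}

theorem shiftedGaleLE_antiExc_exchange_iff (ha : a ∈ antiExc w 0) (hb : b ∉ antiExc w 0)
    (r : Fin n) :
    shiftedGaleLE r (antiExc w r) (insert b ((antiExc w 0).erase a)) ↔
      ∀ t : ℕ, b ∈ cyclicWindow r t → a ∉ cyclicWindow r t →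
        (∃ x ∈ crossersBelow w r, x ∉ cyclicWindow r t) ∧
          ∃ y ∈ crossersAbove w r, y ∈ cyclicWindow r t := by
  have hK := card_insert_erase_inter_add_card_singleton_inter ha hb
  have hI := card_antiExc_inter_add_card_crossersBelow_inter w r
  have hLR := card_crossersBelow w r
  have hcard : #(antiExc w r) = #(insert b ((antiExc w 0).erase a)) := by
    have hKu := hK univ
    have hIu := hI univ
    simp only [inter_univ, card_singleton] at hKu hIu
    omega
  rw [shiftedGaleLE_iff_card_inter_le, and_iff_right hcard]
  refine forall_congr' fun t => ?_
  have hW := disjoint_crossersBelow_or_crossersAbove_subset w r t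
  have hle := card_inter_le_card_inter hLR hW
  have hKt := hK (cyclicWindow r t)
  have hIt := hI (cyclicWindow r t)
  rw [← card_inter_lt_card_inter_iff hLR hW]
  by_cases haW : a ∈ cyclicWindow r t <;> by_cases hbW : b ∈ cyclicWindow r t <;>
    simp only [singleton_inter_of_mem, singleton_inter_of_notMem, card_singleton, card_empty,
      haW, hbW, not_true, not_false_eq_true, true_implies, false_implies, iff_true] at hKt ⊢ <;>
    omega

theorem forall_cyclicWindow_iff (hab : a ≠ b) :
    (∀ (r : Fin n) (t : ℕ), b ∈ cyclicWindow r t → a ∉ cyclicWindow r t →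
        (∃ x ∈ crossersBelow w r, x ∉ cyclicWindow r t) ∧
          ∃ y ∈ crossersAbove w r, y ∈ cyclicWindow r t) ↔
      a < b ∧ ∀ r : Fin n, a < r → r ≤ b →
        (∃ x : Fin n, a ≤ x ∧ x < r ∧ r ≤ w.symm x) ∧
        (∃ y : Fin n, r ≤ y ∧ y ≤ b ∧ w.symm y < r) := by
  constructor
  · intro H
    have hlt : a < b := by
      by_contra hba
      obtain ⟨⟨x, hx, -⟩, -⟩ := H 0 b.val (by simp) (by simp; omega)
      simp [crossersBelow] at hx
    refine ⟨hlt, fun r har hrb => ?_⟩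
    have hbr : (b - r).val = b.val - r.val := Fin.coe_sub_iff_le.2 hrb
    have har' : (a - r).val = n + a.val - r.val := Fin.coe_sub_iff_lt.2 har
    constructor
    · obtain ⟨⟨x, hx, hxW⟩, -⟩ := H r (n + a.val - 1 - r.val) (by simp; omega) (by simp; omega)
      simp only [crossersBelow, mem_filter, mem_univ, true_and, mem_cyclicWindow] at hx hxW
      rw [Fin.coe_sub_iff_lt.2 hx.1] at hxW
      exact ⟨x, by omega, hx⟩
    · obtain ⟨-, y, hy, hyW⟩ := H r (b.val - r.val) (by simp; omega) (by simp; omega)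
      simp only [crossersAbove, mem_filter, mem_univ, true_and, mem_cyclicWindow] at hy hyW
      rw [Fin.coe_sub_iff_le.2 hy.1] at hyW
      exact ⟨y, hy.1, by omega, hy.2⟩
  · rintro ⟨hlt, hcond⟩ r t hbW haW
    simp only [mem_cyclicWindow, Fin.val_sub_eq_ite] at hbW haW ⊢
    have har : a < r := by split_ifs at hbW haW <;> omega
    have hrb : r ≤ b := by split_ifs at hbW haW <;> omega
    obtain ⟨⟨x, hax, hxr, hrx⟩, ⟨y, hry, hyb, hyr⟩⟩ := hcond r har hrb
    refine ⟨⟨x, by simp [crossersBelow, hxr, hrx], ?_⟩,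
      y, by simp [crossersAbove, hry, hyr], ?_⟩ <;>
      split_ifs at haW hbW ⊢ <;> omega

end Exchange

theorem anti_exchange_pair_condition_general (n : ℕ) [NeZero n] (w : Equiv.Perm (Fin n))
    (a b : Fin n)
    (ha : a ∈ antiExc w 0) (hb : b ∉ antiExc w 0) :
    (∀ r : Fin n, shiftedGaleLE r (antiExc w r) (insert b ((antiExc w 0).erase a))) ↔
      (a < b ∧ ∀ r : Fin n, a < r → r ≤ b →
        (∃ x : Fin n, a ≤ x ∧ x < r ∧ r ≤ w.symm x) ∧
        (∃ y : Fin n, r ≤ y ∧ y ≤ b ∧ w.symm y < r)) := by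
  have hab : a ≠ b := fun h => hb (h ▸ ha)
  simp only [shiftedGaleLE_antiExc_exchange_iff ha hb]
  exact forall_cyclicWindow_iff hab

/-- Anti-exchange pair condition: for a derangement `w` with anti-exceedance set
`J = I_1(w)`, `a ∈ J`, `b ∉ J`, the set `(J \ {a}) ∪ {b}` lies in the positroid `M(w)`
iff `a < b` and for every `r ∈ [a+1,b]` there are `x ∈ [a,r-1]` with `w⁻¹(x) ≥ r` and
`y ∈ [r,b]` with `w⁻¹(y) ≤ r-1`. -/
theorem anti_exchange_pair_condition (n : ℕ) [NeZero n] (w : Equiv.Perm (Fin n))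
    (hw : ∀ i, w i ≠ i) (a b : Fin n)
    (ha : a ∈ antiExc w 0) (hb : b ∉ antiExc w 0) :
    (∀ r : Fin n, shiftedGaleLE r (antiExc w r) (insert b ((antiExc w 0).erase a))) ↔
      (a < b ∧ ∀ r : Fin n, a < r → r ≤ b →
        (∃ x : Fin n, a ≤ x ∧ x < r ∧ r ≤ w.symm x) ∧
        (∃ y : Fin n, r ≤ y ∧ y ≤ b ∧ w.symm y < r)) :=
  anti_exchange_pair_condition_general n w a b ha hb
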